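/- For every positive integer m there exists a finite connected 3-regular simple graph G_m on n = 18·2^(m−1) − 2 vertices such that G_m has a spanning tree with exactly (n + 2)/6 = 3·2^(m−1) leaves, and every spanning tree of G_m has at least (n + 2)/6 leaves. Consequently, there exist connected cubic graphs of arbitrarily large order n whose minimum number of leaves over all spanning trees equals (n + 2)/6. -/

import Mathlib

/-!
Hang a gadget (`K₄` minus an edge, with a fifth vertex joined to the two ends of the missing edge)
from each leaf position of a cubic caterpillar with `k + 1` spine vertices. The result is cubic
on `6k + 16` vertices, and each gadget meets the rest of the graph in a single bridge. The part of
a spanning tree inside such a pendant block is itself a tree, and one of its (at least two) leaves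
is not the attachment vertex, so it is a leaf of the whole spanning tree: every spanning tree has
at least `k + 3` leaves. Conversely, the tree running along the spine and through each gadget
along a Hamiltonian path from its attachment vertex has exactly those `k + 3` leaves.
-/

open Function

namespace SimpleGraph
variable {V W : Type*}

def leafSet (T : SimpleGraph V) : Set V := {v | (T.neighborSet v).ncard = 1}

lemma Iso.ncard_neighborSet {G : SimpleGraph V} {G' : SimpleGraph W} (φ : G ≃g G') (v : V) :
    (G'.neighborSet (φ v)).ncard = (G.neighborSet v).ncard := by
  rw [← φ.image_neighborSet, Set.ncard_image_of_injective _ φ.injective]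

lemma Iso.ncard_leafSet {T : SimpleGraph V} {T' : SimpleGraph W} (φ : T ≃g T') :
    T'.leafSet.ncard = T.leafSet.ncard := by
  have : T'.leafSet = φ '' T.leafSet := by
    ext w
    obtain ⟨v, rfl⟩ := φ.surjective w
    simp only [leafSet, Set.mem_ofPred_eq, φ.ncard_neighborSet, φ.injective.mem_set_image]
  rw [this, Set.ncard_image_of_injective _ φ.injective]

lemma Iso.exists_isTree_le_ncard_leafSet {G : SimpleGraph V} {G' : SimpleGraph W} (φ : G ≃g G')
    {T : SimpleGraph W} (hTG : T ≤ G') (hT : T.IsTree) :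
    ∃ T' ≤ G, T'.IsTree ∧ T'.leafSet.ncard = T.leafSet.ncard :=
  let ψ := Iso.comap φ.toEquiv T
  ⟨T.comap φ, fun _ _ h => φ.map_adj_iff.mp (hTG h), ψ.isTree_iff.mpr hT, ψ.ncard_leafSet.symm⟩

def IsMinLeafNumber (G : SimpleGraph V) (ℓ : ℕ) : Prop :=
  (∃ T ≤ G, T.IsTree ∧ T.leafSet.ncard = ℓ) ∧ ∀ T ≤ G, T.IsTree → ℓ ≤ T.leafSet.ncard

lemma IsMinLeafNumber.of_iso {G : SimpleGraph V} {G' : SimpleGraph W} {ℓ : ℕ} (φ : G ≃g G')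
    (h : G.IsMinLeafNumber ℓ) : G'.IsMinLeafNumber ℓ := by
  obtain ⟨⟨T, hTG, hT, rfl⟩, hmin⟩ := h
  refine ⟨?_, fun T' hT'G hT' => ?_⟩
  · exact φ.symm.exists_isTree_le_ncard_leafSet hTG hT
  · obtain ⟨T, hTG, hT, hcard⟩ := φ.exists_isTree_le_ncard_leafSet hT'G hT'
    exact hcard ▸ hmin T hTG hT

lemma Walk.IsPath.support_subset_of_forall_adj {T : SimpleGraph V} {S : Set V} {r : V}
    (hout : ∀ v ∈ S, ∀ w ∉ S, T.Adj v w → v = r) {u v : V} {p : T.Walk u v} (hp : p.IsPath)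
    (hu : u ∈ S) (hv : v ∈ S) : ∀ z ∈ p.support, z ∈ S := by
  -- a vertex outside `S` would force the path to leave and re-enter `S`, both times through `r`
  intro z hz
  by_contra hzS
  obtain ⟨q₁, q₂, rfl⟩ := Walk.mem_support_iff_exists_append.mp hz
  obtain ⟨d₁, hd₁, hd₁S, hd₁S'⟩ := q₁.exists_boundary_dart S hu hzS
  obtain ⟨d₂, hd₂, hd₂S, hd₂S'⟩ := q₂.reverse.exists_boundary_dart S hv hzS
  have hr₁ : r ∈ q₁.support :=
    hout _ hd₁S _ hd₁S' d₁.adj ▸ q₁.dart_fst_mem_support_of_mem_darts hd₁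
  have hr₂ : r ∈ q₂.support := by
    rw [← List.mem_reverse, ← Walk.support_reverse]
    exact hout _ hd₂S _ hd₂S' d₂.adj ▸ q₂.reverse.dart_fst_mem_support_of_mem_darts hd₂
  have hrz : r ≠ z := by rintro rfl; exact hzS (hout _ hd₁S _ hd₁S' d₁.adj ▸ hd₁S)
  have hnodup := hp.support_nodup
  rw [Walk.support_append] at hnodup
  rw [← Walk.cons_tail_support q₂, List.mem_cons] at hr₂
  exact List.disjoint_of_nodup_append hnodup hr₁ (hr₂.resolve_left hrz)

lemma IsTree.connected_induce_of_forall_adj {T : SimpleGraph V} (hT : T.IsTree) {S : Set V} {r : V}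
    (hS : S.Nonempty) (hout : ∀ v ∈ S, ∀ w ∉ S, T.Adj v w → v = r) : (T.induce S).Connected := by
  have : Nonempty S := hS.to_subtype
  refine Connected.mk fun u v => ?_
  obtain ⟨p, hp⟩ := hT.connected.exists_isPath u.1 v.1
  exact ⟨(p.induce S (hp.support_subset_of_forall_adj hout u.2 v.2)).copy rfl rfl⟩

lemma IsTree.exists_mem_leafSet_of_forall_adj {T : SimpleGraph V} (hT : T.IsTree) {S : Set V}
    (hSfin : S.Finite) (hS : S.Nontrivial) {r : V} (hout : ∀ v ∈ S, ∀ w ∉ S, T.Adj v w → v = r) :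
    ∃ v ∈ S, v ∈ T.leafSet := by
  have := hSfin.to_subtype
  have := hS.coe_sort
  have := Fintype.ofFinite S
  classical
  have hS' : (T.induce S).IsTree :=
    ⟨hT.connected_induce_of_forall_adj hS.nonempty hout, hT.isAcyclic.induce S⟩
  obtain ⟨u₁, u₂, hne, hu₁, hu₂⟩ := hS'.exists_ne_and_degree_eq_one
  have mem_leafSet : ∀ u : S, u.1 ≠ r → (T.induce S).degree u = 1 → u.1 ∈ T.leafSet := by
    intro u hur hu
    obtain ⟨w, hw, hw'⟩ := degree_eq_one_iff_existsUnique_adj.mp hu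
    refine Set.ncard_eq_one.mpr ⟨w.1, Set.eq_singleton_iff_unique_mem.mpr ⟨hw, fun x hx => ?_⟩⟩
    have hxS : x ∈ S := by_contra fun hxS => hur (hout _ u.2 x hxS hx)
    exact congrArg Subtype.val (hw' ⟨x, hxS⟩ hx)
  by_cases h₁ : u₁.1 = r
  · have h₂ : u₂.1 ≠ r := fun h₂ => hne (Subtype.ext (h₁.trans h₂.symm))
    exact ⟨u₂, u₂.2, mem_leafSet u₂ h₂ hu₂⟩
  · exact ⟨u₁, u₁.2, mem_leafSet u₁ h₁ hu₁⟩

lemma le_ncard_leafSet_of_pendant [Finite V] {G T : SimpleGraph V} {ι : Type*} {S : ι → Set V}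
    {r : ι → V} (hdisj : Pairwise (Disjoint on S)) (hS : ∀ i, (S i).Nontrivial)
    (hout : ∀ i, ∀ v ∈ S i, ∀ w ∉ S i, G.Adj v w → v = r i) (hTG : T ≤ G) (hT : T.IsTree) :
    Nat.card ι ≤ T.leafSet.ncard := by
  choose f hfS hf using fun i =>
    hT.exists_mem_leafSet_of_forall_adj (S i).toFinite (hS i) fun v hv w hw h =>
      hout i v hv w hw (hTG h)
  have hinj : f.Injective := fun i j hij =>
    hdisj.eq (Set.not_disjoint_iff.mpr ⟨f i, hfS i, hij ▸ hfS j⟩)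
  rw [← Nat.card_range_of_injective hinj, Nat.card_coe_set_eq]
  exact Set.ncard_le_ncard (Set.range_subset_iff.mpr hf)

def parentGraph (root : V) (p : V → V) : SimpleGraph V :=
  fromRel fun a b => a ≠ root ∧ p a = b

section parentGraph

variable {root : V} {p : V → V} {h : V → ℕ}

lemma parentGraph_adj_iff (hp : ∀ v ≠ root, h (p v) < h v) {a b : V} :
    (parentGraph root p).Adj a b ↔ (a ≠ root ∧ p a = b) ∨ (b ≠ root ∧ p b = a) := by
  refine ⟨fun hab => hab.2, fun hab => ⟨?_, hab⟩⟩
  rintro rfl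
  rcases hab with ⟨ha, hpa⟩ | ⟨ha, hpa⟩ <;> exact (hp a ha).ne (congrArg h hpa)

lemma parentGraph_reachable (hp : ∀ v ≠ root, h (p v) < h v) (v : V) :
    (parentGraph root p).Reachable root v := by
  induction hv : h v using Nat.strong_induction_on generalizing v with
  | _ n ih =>
    by_cases hroot : v = root
    · exact hroot ▸ Reachable.refl _
    · exact (ih _ (hv ▸ hp v hroot) _ rfl).trans
        (((parentGraph_adj_iff hp).mpr (.inl ⟨hroot, rfl⟩)).symm.reachable)

lemma parentGraph_isTree [Finite V] (hp : ∀ v ≠ root, h (p v) < h v) :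
    (parentGraph root p).IsTree := by
  have : Nonempty V := ⟨root⟩
  refine isTree_iff_connected_and_card.mpr ⟨Connected.mk fun u v =>
    (parentGraph_reachable hp u).symm.trans (parentGraph_reachable hp v), ?_⟩
  let toEdge : {v // v ≠ root} → (parentGraph root p).edgeSet := fun v =>
    ⟨s(v.1, p v.1), (parentGraph_adj_iff hp).mpr (.inl ⟨v.2, rfl⟩)⟩
  have hbij : Bijective toEdge := by
    refine ⟨fun a b hab => Subtype.ext ?_, ?_⟩
    · rcases Sym2.eq_iff.mp (congrArg Subtype.val hab) with ⟨hab, -⟩ | ⟨hab, hba⟩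
      · exact hab
      · have ha := hp a.1 a.2
        have hb := hp b.1 b.2
        rw [hba] at ha
        rw [← hab] at hb
        omega
    · rintro ⟨e, he⟩
      induction e using Sym2.inductionOn with
      | hf x y =>
        have hxy : (parentGraph root p).Adj x y := he
        rcases (parentGraph_adj_iff hp).mp hxy with ⟨hx, rfl⟩ | ⟨hy, rfl⟩
        · exact ⟨⟨x, hx⟩, rfl⟩
        · exact ⟨⟨y, hy⟩, Subtype.ext Sym2.eq_swap⟩
  have := Fintype.ofFinite V
  classical
  rw [← Nat.card_congr (Equiv.ofBijective toEdge hbij)]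
  simp only [Nat.card_eq_fintype_card, ne_eq, Fintype.card_subtype_compl, Fintype.card_unique]
  exact Nat.sub_add_cancel Fintype.card_pos

lemma parentGraph_neighborSet_eq_singleton (hp : ∀ v ≠ root, h (p v) < h v) {v : V}
    (hv : v ≠ root) (hchild : ∀ u ≠ root, p u ≠ v) :
    (parentGraph root p).neighborSet v = {p v} := by
  ext w
  rw [mem_neighborSet, parentGraph_adj_iff hp, Set.mem_singleton_iff]
  refine ⟨?_, fun hw => .inl ⟨hv, hw.symm⟩⟩
  rintro (⟨-, rfl⟩ | ⟨hw, hpw⟩)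
  · rfl
  · exact absurd hpw (hchild w hw)

lemma one_lt_ncard_neighborSet_parentGraph [Finite V] (hp : ∀ v ≠ root, h (p v) < h v) {u v : V}
    (hv : v ≠ root) (hu : u ≠ root) (huv : p u = v) :
    1 < ((parentGraph root p).neighborSet v).ncard := by
  refine (Set.one_lt_ncard_iff (Set.toFinite _)).mpr ⟨p v, u, ?_, ?_, fun h' => ?_⟩
  · exact (parentGraph_adj_iff hp).mpr (.inl ⟨hv, rfl⟩)
  · exact (parentGraph_adj_iff hp).mpr (.inr ⟨hu, huv⟩)
  · have := hp v hv
    have := hp u hu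
    rw [h', huv] at *
    omega

end parentGraph

end SimpleGraph

namespace GadgetCaterpillar

open SimpleGraph

-- `K₄` minus the edge `14` on `{1, 2, 3, 4}`, with the attachment vertex `0` joined to `1` and `4`
def gadget : SimpleGraph (Fin 5) :=
  fromRel fun t t' =>
    (t, t') ∈ ({(0, 1), (1, 2), (2, 3), (3, 4), (4, 0), (1, 3), (2, 4)} : Finset _)

instance : DecidableRel gadget.Adj := fun _ _ => inferInstanceAs (Decidable (_ ∧ _))

abbrev Vert (k : ℕ) := Fin (k + 1) ⊕ Fin (k + 3) × Fin 5

/-- Spine path `inl 0, …, inl k`; gadget `j` hangs from spine vertex `min (j - 1) k`, so that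
(by truncated subtraction) gadgets `0, 1` hang from `inl 0` and gadgets `k + 1, k + 2` from `inl k`.
-/
def rel (k : ℕ) : Vert k → Vert k → Prop
  | .inl i, .inl i' => i.val + 1 = i'.val
  | .inr (j, t), .inl i => t = 0 ∧ min (j.val - 1) k = i.val
  | .inr (j, t), .inr (j', t') => j = j' ∧ gadget.Adj t t'
  | .inl _, .inr _ => False

def graph (k : ℕ) : SimpleGraph (Vert k) := fromRel (rel k)

variable {k : ℕ} {i i' : Fin (k + 1)} {j j' : Fin (k + 3)} {t t' : Fin 5}

@[simp] lemma adj_inl_inl :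
    (graph k).Adj (.inl i) (.inl i') ↔ i.val + 1 = i'.val ∨ i'.val + 1 = i.val := by
  simp only [graph, fromRel_adj, rel, ne_eq, Sum.inl.injEq, Fin.ext_iff]
  omega

@[simp] lemma adj_inl_inr :
    (graph k).Adj (.inl i) (.inr (j, t)) ↔ t = 0 ∧ min (j.val - 1) k = i.val := by
  simp [graph, rel]

@[simp] lemma adj_inr_inl :
    (graph k).Adj (.inr (j, t)) (.inl i) ↔ t = 0 ∧ min (j.val - 1) k = i.val := by
  simp [graph, rel]

@[simp] lemma adj_inr_inr :
    (graph k).Adj (.inr (j, t)) (.inr (j', t')) ↔ j = j' ∧ gadget.Adj t t' := by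
  simp only [graph, fromRel_adj, rel, ne_eq, Sum.inr.injEq, Prod.mk.injEq]
  constructor
  · rintro ⟨-, h | ⟨rfl, h⟩⟩
    · exact h
    · exact ⟨rfl, h.symm⟩
  · rintro ⟨rfl, h⟩
    exact ⟨fun ⟨_, h'⟩ => h.ne h', .inl ⟨rfl, h⟩⟩

lemma neighborSet_inl (i : Fin (k + 1)) : (graph k).neighborSet (.inl i) =
    {if i.val = 0 then .inr (0, 0) else .inl ⟨i - 1, by omega⟩,
     if h : i.val = k then .inr (Fin.last _, 0) else .inl ⟨i + 1, by omega⟩,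
     .inr (⟨i + 1, by omega⟩, 0)} := by
  ext (i' | ⟨j, t⟩)
  · have := i'.isLt
    simp only [mem_neighborSet, adj_inl_inl, Set.mem_insert_iff, Set.mem_singleton_iff]
    split_ifs <;> simp only [Sum.inl.injEq, Fin.ext_iff, false_or, or_false, iff_false] <;> omega
  · have := j.isLt
    simp only [mem_neighborSet, adj_inl_inr, Set.mem_insert_iff, Set.mem_singleton_iff]
    split_ifs <;> simp only [Sum.inr.injEq, Prod.mk.injEq, Fin.ext_iff,
      Fin.val_zero, Fin.val_last, false_or] <;> omega

lemma neighborSet_inr_zero (j : Fin (k + 3)) : (graph k).neighborSet (.inr (j, 0)) =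
    insert (.inl ⟨min (j.val - 1) k, by omega⟩)
      ((fun t => .inr (j, t)) '' gadget.neighborSet 0) := by
  ext (i | ⟨j', t⟩)
  · simp only [mem_neighborSet, adj_inr_inl, Set.mem_insert_iff, Sum.inl.injEq, Fin.ext_iff,
      Set.mem_image, reduceCtorEq, and_false, exists_false, or_false, true_and]
    exact eq_comm
  · simp only [mem_neighborSet, adj_inr_inr, Set.mem_insert_iff, reduceCtorEq, Set.mem_image,
      Sum.inr.injEq, Prod.mk.injEq, false_or]
    exact ⟨fun ⟨hj, h⟩ => ⟨t, h, hj, rfl⟩, fun ⟨_, h, hj, ht⟩ => ⟨hj, ht ▸ h⟩⟩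

lemma neighborSet_inr_of_ne_zero (j : Fin (k + 3)) {t : Fin 5} (ht : t ≠ 0) :
    (graph k).neighborSet (.inr (j, t)) = (fun t' => .inr (j, t')) '' gadget.neighborSet t := by
  ext (i | ⟨j', t'⟩)
  · simp [ht]
  · simp only [mem_neighborSet, adj_inr_inr, Set.mem_image, Sum.inr.injEq, Prod.mk.injEq]
    exact ⟨fun ⟨hj, h⟩ => ⟨t', h, hj, rfl⟩, fun ⟨_, h, hj, ht⟩ => ⟨hj, ht ▸ h⟩⟩

lemma ncard_neighborSet_gadget (t : Fin 5) :
    (gadget.neighborSet t).ncard = if t = 0 then 2 else 3 := by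
  rw [← Nat.card_coe_set_eq, Nat.card_eq_fintype_card, card_neighborSet_eq_degree]
  revert t
  decide

theorem ncard_neighborSet_graph (v : Vert k) : ((graph k).neighborSet v).ncard = 3 := by
  rcases v with i | ⟨j, t⟩
  · rw [neighborSet_inl]
    refine Set.ncard_eq_three.mpr ⟨_, _, _, ?_, ?_, ?_, rfl⟩ <;> split_ifs <;>
      simp only [ne_eq, Sum.inl.injEq, Sum.inr.injEq, reduceCtorEq, Prod.mk.injEq, Fin.ext_iff,
        Fin.val_zero, Fin.val_last, and_true, not_false_eq_true] <;> omega
  · have himage := Set.ncard_image_of_injective (gadget.neighborSet t)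
      (f := fun t' => (.inr (j, t') : Vert k)) fun _ _ h => by simpa using h
    by_cases ht : t = 0
    · subst ht
      rw [neighborSet_inr_zero, Set.ncard_insert_of_notMem (by simp), himage,
        ncard_neighborSet_gadget]
      rfl
    · rw [neighborSet_inr_of_ne_zero j ht, himage, ncard_neighborSet_gadget, if_neg ht]

def parent : Vert k → Vert k
  | .inl i => .inl ⟨i.val - 1, by omega⟩
  | .inr (j, t) =>
    if t = 0 then .inl ⟨min (j.val - 1) k, by omega⟩ else .inr (j, ⟨t.val - 1, by omega⟩)

def height : Vert k → ℕ
  | .inl i => i.val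
  | .inr (j, t) => min (j.val - 1) k + t.val + 1

lemma height_parent_lt : ∀ v : Vert k, v ≠ .inl 0 → height (parent v) < height v := by
  rintro (i | ⟨j, t⟩) hv
  · have : i.val ≠ 0 := fun h => hv (congrArg Sum.inl (Fin.ext h))
    simp only [parent, height]
    omega
  · simp only [parent]
    split_ifs with ht <;> simp only [height] <;> omega

lemma graph_adj_parent : ∀ v : Vert k, v ≠ .inl 0 → (graph k).Adj v (parent v) := by
  rintro (i | ⟨j, t⟩) hv
  · have : i.val ≠ 0 := fun h => hv (congrArg Sum.inl (Fin.ext h))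
    simp only [parent, adj_inl_inl]
    omega
  · simp only [parent]
    split_ifs with ht
    · simp [ht]
    · simp only [adj_inr_inr, true_and]
      fin_cases t <;> first | exact absurd rfl ht | decide

def tree (k : ℕ) : SimpleGraph (Vert k) := parentGraph (.inl 0) parent

lemma tree_isTree : (tree k).IsTree := parentGraph_isTree height_parent_lt

lemma tree_le_graph : tree k ≤ graph k := by
  intro a b hab
  rcases (parentGraph_adj_iff height_parent_lt).mp hab with ⟨ha, rfl⟩ | ⟨hb, rfl⟩
  · exact graph_adj_parent a ha
  · exact (graph_adj_parent b hb).symm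

lemma leafSet_tree : (tree k).leafSet = Set.range fun j => .inr (j, 4) := by
  have hp := height_parent_lt (k := k)
  ext v
  simp only [leafSet, Set.mem_ofPred_eq, Set.mem_range]
  constructor
  · intro hv
    by_contra hne
    refine hv.not_gt ?_
    rcases v with i | ⟨j, t⟩
    · by_cases hi : i = 0
      · subst hi
        refine (Set.one_lt_ncard_iff (Set.toFinite _)).mpr
          ⟨.inr (0, 0), .inr (1, 0), ?_, ?_, by simp⟩ <;>
          exact (parentGraph_adj_iff hp).mpr (.inr ⟨by simp, by simp [parent]⟩)
      · refine one_lt_ncard_neighborSet_parentGraph hp (u := .inr (⟨i + 1, by omega⟩, 0))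
          (by simpa using hi) (by simp) ?_
        simp only [parent, if_true, Sum.inl.injEq, Fin.ext_iff]
        omega
    · have ht : t ≠ 4 := fun ht => hne ⟨j, ht ▸ rfl⟩
      refine one_lt_ncard_neighborSet_parentGraph hp (u := .inr (j, ⟨t + 1, by omega⟩))
        (by simp) (by simp) ?_
      have : (⟨t + 1, by omega⟩ : Fin 5) ≠ 0 := fun h => t.val.succ_ne_zero (congrArg Fin.val h)
      simp only [parent, if_neg this, Nat.add_sub_cancel]
  · rintro ⟨j, rfl⟩
    rw [tree, parentGraph_neighborSet_eq_singleton hp (by simp) ?_, Set.ncard_singleton]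
    rintro (i | ⟨j', t'⟩) - h
    · simp [parent] at h
    · simp only [parent] at h
      split_ifs at h
      simp [Fin.ext_iff] at h
      omega

lemma ncard_leafSet_tree : (tree k).leafSet.ncard = k + 3 := by
  rw [leafSet_tree, ← Nat.card_coe_set_eq,
    Nat.card_range_of_injective fun _ _ h => by simpa using h]
  simp

lemma le_ncard_leafSet {T : SimpleGraph (Vert k)} (hTG : T ≤ graph k) (hT : T.IsTree) :
    k + 3 ≤ T.leafSet.ncard := by
  have := le_ncard_leafSet_of_pendant (S := fun j => Set.range fun t => (.inr (j, t) : Vert k))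
    (r := fun j => .inr (j, 0)) ?_ ?_ ?_ hTG hT
  · simpa using this
  · intro j j' hjj'
    exact Set.disjoint_range_iff.mpr fun t t' h => hjj' (congrArg Prod.fst (Sum.inr_injective h))
  · exact fun j => ⟨_, ⟨0, rfl⟩, _, ⟨1, rfl⟩, by simp⟩
  · rintro j _ ⟨t, rfl⟩ (i | ⟨j', t'⟩) hw hadj
    · simp only [adj_inr_inl] at hadj
      rw [hadj.1]
    · simp only [adj_inr_inr] at hadj
      exact absurd ⟨t', by rw [hadj.1]⟩ hw

theorem isMinLeafNumber_graph : (graph k).IsMinLeafNumber (k + 3) :=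
  ⟨⟨tree k, tree_le_graph, tree_isTree, ncard_leafSet_tree⟩, fun _ => le_ncard_leafSet⟩

theorem connected_graph : (graph k).Connected := tree_isTree.connected.mono tree_le_graph

end GadgetCaterpillar

open SimpleGraph GadgetCaterpillar in
theorem exists_cubic_isMinLeafNumber (k : ℕ) {W : Type*} [Fintype W]
    (hW : Fintype.card W = 6 * k + 16) : ∃ G : SimpleGraph W,
      G.Connected ∧ (∀ w, (G.neighborSet w).ncard = 3) ∧ G.IsMinLeafNumber (k + 3) := by
  have hcard : Fintype.card (Vert k) = Fintype.card W := by simp [hW]; ring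
  let φ := Iso.map (Fintype.equivOfCardEq hcard) (graph k)
  refine ⟨_, φ.connected_iff.mp connected_graph, fun w => ?_, isMinLeafNumber_graph.of_iso φ⟩
  obtain ⟨v, rfl⟩ := φ.surjective w
  rw [φ.ncard_neighborSet, ncard_neighborSet_graph]

theorem stmt_9_general (m : ℕ) :
    ∃ G : SimpleGraph (Fin (18 * 2 ^ (m - 1) - 2)),
      G.Connected ∧ (∀ w, (G.neighborSet w).ncard = 3) ∧
      ((18 * 2 ^ (m - 1) - 2) + 2) / 6 = 3 * 2 ^ (m - 1) ∧
      (∃ T : SimpleGraph (Fin (18 * 2 ^ (m - 1) - 2)), T ≤ G ∧ T.IsTree ∧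
        {v | (T.neighborSet v).ncard = 1}.ncard = 3 * 2 ^ (m - 1)) ∧
      (∀ T : SimpleGraph (Fin (18 * 2 ^ (m - 1) - 2)), T ≤ G → T.IsTree →
        3 * 2 ^ (m - 1) ≤ {v | (T.neighborSet v).ncard = 1}.ncard) := by
  have hpow : 1 ≤ 2 ^ (m - 1) := Nat.one_le_two_pow
  have hleaves : 3 * 2 ^ (m - 1) - 3 + 3 = 3 * 2 ^ (m - 1) := by omega
  obtain ⟨G, hconn, hcubic, hmin⟩ :=
    exists_cubic_isMinLeafNumber (3 * 2 ^ (m - 1) - 3) (W := Fin (18 * 2 ^ (m - 1) - 2))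
      (by rw [Fintype.card_fin]; omega)
  rw [hleaves] at hmin
  exact ⟨G, hconn, hcubic, by omega, hmin.1, hmin.2⟩

/-- For every positive integer `m`, there is a finite connected `3`-regular simple graph on
`n = 18 * 2 ^ (m - 1) - 2` vertices having a spanning tree with exactly
`(n + 2) / 6 = 3 * 2 ^ (m - 1)` leaves, and every spanning tree of which has at least
`(n + 2) / 6` leaves. -/
theorem stmt_9 (m : ℕ) (hm : 1 ≤ m) :
    ∃ G : SimpleGraph (Fin (18 * 2 ^ (m - 1) - 2)),
      G.Connected ∧ (∀ w, (G.neighborSet w).ncard = 3) ∧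
      ((18 * 2 ^ (m - 1) - 2) + 2) / 6 = 3 * 2 ^ (m - 1) ∧
      (∃ T : SimpleGraph (Fin (18 * 2 ^ (m - 1) - 2)), T ≤ G ∧ T.IsTree ∧
        {v | (T.neighborSet v).ncard = 1}.ncard = 3 * 2 ^ (m - 1)) ∧
      (∀ T : SimpleGraph (Fin (18 * 2 ^ (m - 1) - 2)), T ≤ G → T.IsTree →
        3 * 2 ^ (m - 1) ≤ {v | (T.neighborSet v).ncard = 1}.ncard) :=
  stmt_9_general m
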